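/- Let E be an étale F-algebra of degree n, K/F a quadratic field extension, and λ ∈ E×. Then det V_{E,λ} = N_{E/F}(λ)·det_F(E) and disc V_{E,λ} = N_{E/F}(λ)·disc_F(E) as classes in F×/N_{K/F}(K×), where disc = (−1)^{n(n−1)/2}·det. -/

import Mathlib

/-!
In the base change `f ⊗ 1` of an `F`-basis `f` of `E`, the involution `σ` fixes the basis vectors
and the trace commutes with base change, so the Gram matrix of `⟨·,·⟩_λ` is the image of
`(Tr_{E/F}(λ f_i f_j)) = (matrix of multiplication by λ)ᵀ · (Tr_{E/F}(f_i f_j))`, whose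
determinant is `N_{E/F}(λ) · det_F(E)`. Passing to any other `K`-basis multiplies the Gram
determinant by `d · σ(d)`, `d` being the determinant of the change of basis.
-/

open scoped TensorProduct
open Matrix

/-- The involution `σ = conj ⊗ id` on `K_E = K ⊗[F] E`. -/
noncomputable def tensorConj {F K E : Type} [Field F] [Field K] [Algebra F K]
    [CommRing E] [Algebra F E] (conj : K →ₐ[F] K) :
    (K ⊗[F] E) →ₐ[F] (K ⊗[F] E) :=
  Algebra.TensorProduct.map conj (AlgHom.id F E)

/-- The hermitian form `⟨x,y⟩_μ = Tr_{K_E/K}(μ · x · σ(y))` on `K_E`. -/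
noncomputable def hermFormOf {F K E : Type} [Field F] [Field K] [Algebra F K]
    [CommRing E] [Algebra F E] (conj : K →ₐ[F] K) (μ x y : K ⊗[F] E) : K :=
  Algebra.trace K (K ⊗[F] E) (μ * x * (tensorConj conj y))

section Sesquilinear

variable {R M₁ M₂ ι κ : Type*} [CommRing R] [AddCommGroup M₁] [Module R M₁] [AddCommGroup M₂]
  [Module R M₂] [Fintype ι] [DecidableEq ι] [Fintype κ] [DecidableEq κ] {σ₁ σ₂ : R →+* R}

theorem LinearMap.toMatrix₂_mul_basis_toMatrix_map (B : M₁ →ₛₗ[σ₁] M₂ →ₛₗ[σ₂] R)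
    (b₁ c₁ : Module.Basis ι R M₁) (b₂ c₂ : Module.Basis κ R M₂) :
    ((b₁.toMatrix c₁).map σ₁)ᵀ * toMatrix₂ b₁ b₂ B * (b₂.toMatrix c₂).map σ₂
      = toMatrix₂ c₁ c₂ B := by
  ext i j
  rw [toMatrix₂_apply, apply_eq_dotProduct_toMatrix₂_mulVec b₁ b₂ B]
  simp only [dotProduct, mulVec, Matrix.mul_apply, Finset.mul_sum, Finset.sum_mul,
    Function.comp_apply, transpose_apply, map_apply, Module.Basis.toMatrix_apply]
  rw [Finset.sum_comm]
  simp only [mul_assoc]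

theorem LinearMap.det_toMatrix₂_basis_change (B : M₁ →ₛₗ[σ₁] M₁ →ₛₗ[σ₂] R)
    (b c : Module.Basis ι R M₁) :
    (toMatrix₂ c c B).det = σ₁ (b.det c) * σ₂ (b.det c) * (toMatrix₂ b b B).det := by
  rw [← toMatrix₂_mul_basis_toMatrix_map B b c b c, det_mul, det_mul, det_transpose,
    ← RingHom.mapMatrix_apply, ← RingHom.mapMatrix_apply, ← RingHom.map_det, ← RingHom.map_det,
    Module.Basis.det_apply]
  ring

end Sesquilinear

theorem Algebra.trace_one_tmul {R A B : Type*} [CommRing R] [CommRing A] [Algebra R A]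
    [CommRing B] [Algebra R B] [Module.Free R B] [Module.Finite R B] (x : B) :
    Algebra.trace A (A ⊗[R] B) (1 ⊗ₜ x) = algebraMap R A (Algebra.trace R B x) := by
  rw [Algebra.trace_apply, ← Algebra.baseChange_lmul, LinearMap.trace_baseChange,
    Algebra.trace_apply]

theorem Algebra.det_trace_mul_mul_eq_norm_mul_discr {R S ι : Type*} [CommRing R] [CommRing S]
    [Algebra R S] [Fintype ι] [DecidableEq ι] (b : Module.Basis ι R S) (x : S) :
    (Matrix.of fun i j => Algebra.trace R S (x * b i * b j)).det
      = Algebra.norm R x * Algebra.discr R b := by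
  have : (Matrix.of fun i j => Algebra.trace R S (x * b i * b j))
      = LinearMap.toMatrix₂ b b (Algebra.traceForm R S ∘ₗ Algebra.lmul R S x) := by
    ext i j
    simp
  rw [this, LinearMap.toMatrix₂_comp b b, ← Algebra.leftMulMatrix_apply, det_mul, det_transpose,
    ← Algebra.norm_eq_matrix_det, Algebra.discr, Algebra.traceMatrix_of_basis]
  rfl

section HermitianForm

variable {F K E : Type} [Field F] [Field K] [Algebra F K] [CommRing E] [Algebra F E]

theorem tensorConj_smul (conj : K →ₐ[F] K) (c : K) (x : K ⊗[F] E) :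
    tensorConj conj (c • x) = conj c • tensorConj conj x := by
  simp only [Algebra.smul_def, Algebra.TensorProduct.algebraMap_apply, map_mul]
  rfl

theorem tensorConj_one_tmul (conj : K →ₐ[F] K) (x : E) :
    tensorConj conj ((1 : K) ⊗ₜ x) = (1 : K) ⊗ₜ x := by
  simp [tensorConj]

noncomputable def hermForm (conj : K →ₐ[F] K) (μ : K ⊗[F] E) :
    K ⊗[F] E →ₗ[K] K ⊗[F] E →ₛₗ[(conj : K →+* K)] K :=
  LinearMap.mk₂'ₛₗ _ _ (hermFormOf conj μ)
    (fun x x' y => by simp only [hermFormOf, mul_add, add_mul, map_add])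
    (fun c x y => by simp only [hermFormOf, mul_smul_comm, smul_mul_assoc, map_smul]; rfl)
    (fun x y y' => by simp only [hermFormOf, mul_add, map_add])
    (fun c x y => by
      simp only [hermFormOf, tensorConj_smul, mul_smul_comm, map_smul]; rfl)

theorem hermForm_apply (conj : K →ₐ[F] K) (μ x y : K ⊗[F] E) :
    hermForm conj μ x y = hermFormOf conj μ x y :=
  rfl

theorem toMatrix₂_hermForm_baseChange [Module.Finite F E] {ι : Type*} [Fintype ι]
    [DecidableEq ι] (conj : K →ₐ[F] K) (b : Module.Basis ι F E) (a : E) :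
    LinearMap.toMatrix₂ (b.baseChange K) (b.baseChange K)
        (hermForm conj (Algebra.TensorProduct.includeRight a))
      = (Matrix.of fun i j => Algebra.trace F E (a * b i * b j)).map (algebraMap F K) := by
  ext i j
  simp only [LinearMap.toMatrix₂_apply, hermForm_apply, hermFormOf, Module.Basis.baseChange_apply,
    tensorConj_one_tmul, Algebra.TensorProduct.includeRight_apply,
    Algebra.TensorProduct.tmul_mul_tmul, one_mul, Algebra.trace_one_tmul, map_apply, of_apply]

end HermitianForm

theorem stmt7_general (F K E : Type) [Field F] [Field K] [Algebra F K]
    [CommRing E] [Algebra F E] (n : ℕ)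
    (conj : K →ₐ[F] K)
    [Module.Finite F E]
    (lam : Eˣ)
    (e : Module.Basis (Fin n) K (K ⊗[F] E)) (f : Module.Basis (Fin n) F E) :
    (∃ y : Kˣ,
      (Matrix.of fun i j =>
          hermFormOf conj (Algebra.TensorProduct.includeRight (lam : E)) (e i) (e j)).det
        = algebraMap F K
            (Algebra.norm F (lam : E)
              * (Matrix.of fun i j => Algebra.trace F E (f i * f j)).det)
          * ((y : K) * conj (y : K))) ∧
    (∃ y' : Kˣ,
      (-1 : K) ^ (n * (n - 1) / 2) *
        (Matrix.of fun i j =>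
            hermFormOf conj (Algebra.TensorProduct.includeRight (lam : E)) (e i) (e j)).det
        = algebraMap F K
            ((-1 : F) ^ (n * (n - 1) / 2) * Algebra.norm F (lam : E)
              * (Matrix.of fun i j => Algebra.trace F E (f i * f j)).det)
          * ((y' : K) * conj (y' : K))) := by
  set H := hermForm conj (Algebra.TensorProduct.includeRight (lam : E))
  have hgram : (Matrix.of fun i j =>
      hermFormOf conj (Algebra.TensorProduct.includeRight (lam : E)) (e i) (e j))
      = LinearMap.toMatrix₂ e e H := by
    ext i j
    rw [LinearMap.toMatrix₂_apply, hermForm_apply, of_apply]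
  obtain ⟨y, hy⟩ := (f.baseChange K).isUnit_det e
  have hdet : (Matrix.of fun i j =>
      hermFormOf conj (Algebra.TensorProduct.includeRight (lam : E)) (e i) (e j)).det
      = algebraMap F K (Algebra.norm F (lam : E)
          * (Matrix.of fun i j => Algebra.trace F E (f i * f j)).det) * (y * conj y) := by
    rw [hgram, LinearMap.det_toMatrix₂_basis_change H (f.baseChange K) e,
      toMatrix₂_hermForm_baseChange, ← RingHom.mapMatrix_apply, ← RingHom.map_det,
      Algebra.det_trace_mul_mul_eq_norm_mul_discr, ← hy, RingHom.id_apply, mul_comm]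
    rfl
  refine ⟨⟨y, hdet⟩, ⟨y, ?_⟩⟩
  rw [hdet]
  simp only [map_mul, map_pow, map_neg, map_one]
  ring

/-- `det V_{E,λ} = N_{E/F}(λ)·det_F(E)` and
`disc V_{E,λ} = N_{E/F}(λ)·disc_F(E)` as classes in `F×/N_{K/F}(K×)`, where
`disc = (−1)^{n(n−1)/2}·det`, the Gram determinant of `V_{E,λ}` being computed
with respect to any `K`-basis and the trace-form determinant of `E/F` with
respect to any `F`-basis. -/
theorem stmt7 (F K E : Type) [Field F] [Field K] [Algebra F K]
    [CommRing E] [Algebra F E] (n : ℕ)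
    (hchar : (2 : F) ≠ 0)
    (hK2 : Module.finrank F K = 2)
    (conj : K →ₐ[F] K)
    (hconj : ∀ x, conj (conj x) = x)
    (hfix : ∀ x : K, conj x = x ↔ ∃ a : F, algebraMap F K a = x)
    [Module.Finite F E] (hEn : Module.finrank F E = n)
    (hEet : ∀ x : E, x ≠ 0 → ∃ y : E, Algebra.trace F E (x * y) ≠ 0)
    (lam : Eˣ)
    (e : Module.Basis (Fin n) K (K ⊗[F] E)) (f : Module.Basis (Fin n) F E) :
    (∃ y : Kˣ,
      (Matrix.of fun i j =>
          hermFormOf conj (Algebra.TensorProduct.includeRight (lam : E)) (e i) (e j)).det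
        = algebraMap F K
            (Algebra.norm F (lam : E)
              * (Matrix.of fun i j => Algebra.trace F E (f i * f j)).det)
          * ((y : K) * conj (y : K))) ∧
    (∃ y' : Kˣ,
      (-1 : K) ^ (n * (n - 1) / 2) *
        (Matrix.of fun i j =>
            hermFormOf conj (Algebra.TensorProduct.includeRight (lam : E)) (e i) (e j)).det
        = algebraMap F K
            ((-1 : F) ^ (n * (n - 1) / 2) * Algebra.norm F (lam : E)
              * (Matrix.of fun i j => Algebra.trace F E (f i * f j)).det)
          * ((y' : K) * conj (y' : K))) :=
  stmt7_general F K E n conj lam e f
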